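/- arXiv:math/0404422 — 2 statements merged into one kernel-verified Lean document; each statement's English description precedes it below -/
import Mathlib

section
/- For 2 ≤ n ≤ 6, the conical solution u(x) = |x|/√(n-1) is unstable on any domain Ω ⊂ ℝⁿ containing the origin: there exists ζ ∈ C_c¹(Ω) with ∫_Ω ζ²/u² > ∫_Ω |Dζ|². -/
open MeasureTheory Real

lemma maxsq_hasDerivAt (x : ℝ) : HasDerivAt (fun y : ℝ => max 0 y ^ 2) (2 * max 0 x) x := by
  rcases lt_trichotomy x 0 with h|h|h
  · have he : (fun y : ℝ => max 0 y ^ 2) =ᶠ[nhds x] fun _ => (0:ℝ) := by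
      filter_upwards [eventually_lt_nhds h] with y hy
      simp [max_eq_left hy.le]
    rw [show (2:ℝ) * max 0 x = 0 by simp [max_eq_left h.le]]
    exact (hasDerivAt_const x (0:ℝ)).congr_of_eventuallyEq he
  · subst h
    rw [hasDerivAt_iff_isLittleO]
    simp only [max_self, mul_zero, sub_zero, smul_zero, zero_pow]
    rw [Asymptotics.isLittleO_iff]
    intro c hc
    filter_upwards [Metric.eventually_nhds_iff.mpr ⟨c, hc, fun {y} hy => hy⟩] with y hy
    have h1 : dist y 0 < c := hy
    rw [Real.dist_eq, sub_zero] at h1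
    have h2 : max 0 y ^ 2 ≤ |y| * |y| := by
      rcases le_total y 0 with h3|h3
      · simp only [max_eq_left h3]
        nlinarith [abs_nonneg y, mul_self_nonneg (|y|)]
      · rw [max_eq_right h3, abs_of_nonneg h3]
        nlinarith
    simp only [norm_eq_abs, zero_pow, sub_zero]
    norm_num
    calc max 0 y ^2 ≤ |y| * |y| := h2
      _ ≤ c * |y| := by nlinarith [abs_nonneg y]
  · have he : (fun y : ℝ => max 0 y ^ 2) =ᶠ[nhds x] fun y => y^2 := by
      filter_upwards [eventually_gt_nhds h] with y hy
      simp [max_eq_right hy.le]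
    rw [show (2:ℝ) * max 0 x = 2*x by simp [max_eq_right h.le]]
    have h2 : HasDerivAt (fun y : ℝ => y^2) (2*x) x := by
      simpa [mul_comm] using hasDerivAt_pow 2 x
    exact h2.congr_of_eventuallyEq he

lemma maxsq_contDiff : ContDiff ℝ 1 (fun y : ℝ => max 0 y ^ 2) := by
  rw [contDiff_one_iff_deriv]
  refine ⟨fun y => (maxsq_hasDerivAt y).differentiableAt, ?_⟩
  have hd : deriv (fun y : ℝ => max 0 y ^ 2) = fun y => 2 * max 0 y :=
    funext fun y => (maxsq_hasDerivAt y).deriv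
  rw [hd]
  fun_prop

noncomputable def gg (t : ℝ) : ℝ := max 0 (t - t^2) ^ 2
noncomputable def gg' (t : ℝ) : ℝ := 2 * max 0 (t - t^2) * (1 - 2*t)

lemma gg_hasDerivAt (t : ℝ) : HasDerivAt gg (gg' t) t := by
  have hp : HasDerivAt (fun t : ℝ => t - t^2) (1 - 2*t) t := by
    exact ((hasDerivAt_id' t).sub (hasDerivAt_pow 2 t)).congr_deriv (by norm_num)
  have h2 := (maxsq_hasDerivAt (t - t^2)).comp t hp
  have h3 : HasDerivAt (fun y : ℝ => max 0 (y - y^2) ^ 2) (2 * max 0 (t - t^2) * (1 - 2*t)) t := by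
    exact h2
  exact h3

lemma gg_contDiff : ContDiff ℝ 1 gg := by
  have : ContDiff ℝ 1 (fun t : ℝ => t - t^2) := by fun_prop
  exact maxsq_contDiff.comp this

lemma gg_zero {t : ℝ} (h : t ≤ 0 ∨ 1 ≤ t) : gg t = 0 ∧ gg' t = 0 := by
  have hm : max 0 (t - t^2) = 0 := max_eq_left (by rcases h with h|h <;> nlinarith)
  simp [gg, gg', hm]

noncomputable def ww (c t : ℝ) : ℝ := Real.exp (c*t) * gg t
noncomputable def ww' (c t : ℝ) : ℝ := Real.exp (c*t) * (c * gg t + gg' t)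

lemma ww_hasDerivAt (c t : ℝ) : HasDerivAt (ww c) (ww' c t) t := by
  have h1 : HasDerivAt (fun t : ℝ => Real.exp (c*t)) (c * Real.exp (c*t)) t := by
    simpa [mul_comm, Function.comp_def] using (Real.hasDerivAt_exp (c*t)).comp t ((hasDerivAt_id' t).const_mul c)
  have h2 := h1.mul (gg_hasDerivAt t)
  have h3 : HasDerivAt (ww c) (c * Real.exp (c*t) * gg t + Real.exp (c*t) * gg' t) t := h2
  convert h3 using 1
  simp [ww']
  ring

lemma ww_contDiff (c : ℝ) : ContDiff ℝ 1 (ww c) := by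
  have h1 : ContDiff ℝ 1 (fun t : ℝ => Real.exp (c*t)) := by fun_prop
  exact h1.mul gg_contDiff

lemma ww_zero {t : ℝ} (c : ℝ) (h : t ≤ 0 ∨ 1 ≤ t) : ww c t = 0 ∧ ww' c t = 0 := by
  obtain ⟨h1, h2⟩ := gg_zero h
  simp [ww, ww', h1, h2]

lemma ww_continuous (c : ℝ) : Continuous (ww c) := (ww_contDiff c).continuous

lemma ww'_continuous (c : ℝ) : Continuous (ww' c) := by
  have : Continuous gg := gg_contDiff.continuous
  have hg' : Continuous gg' := by
    unfold gg'
    fun_prop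
  unfold ww'
  fun_prop

noncomputable def A1 (u : ℝ) : ℝ := u^5/5 - 2/3*u^6 + 6/7*u^7 - u^8/2 + u^9/9

lemma A1_hasDerivAt (u : ℝ) : HasDerivAt A1 ((u - u^2)^4) u := by
  have h5 := hasDerivAt_pow 5 u
  have h6 := hasDerivAt_pow 6 u
  have h7 := hasDerivAt_pow 7 u
  have h8 := hasDerivAt_pow 8 u
  have h9 := hasDerivAt_pow 9 u
  have h := ((((h5.div_const 5).sub (h6.const_mul (2/3:ℝ))).add
      (h7.const_mul (6/7:ℝ))).sub (h8.div_const 2)).add (h9.div_const 9)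
  exact h.congr_deriv (by push_cast; ring)

lemma integral_P1 : ∫ u in (0:ℝ)..1, (u - u^2)^4 = 1/630 := by
  rw [intervalIntegral.integral_eq_sub_of_hasDerivAt (fun u _ => A1_hasDerivAt u)
    (by apply Continuous.intervalIntegrable; fun_prop)]
  simp [A1]
  norm_num

noncomputable def A2 (c u : ℝ) : ℝ :=
  c^2 * A1 u + c*(u-u^2)^4 + 4*(u^3/3 - 3/2*u^4 + 13/5*u^5 - 2*u^6 + 4/7*u^7)

lemma A2_hasDerivAt (c u : ℝ) :
    HasDerivAt (A2 c) ((c*(u-u^2)^2 + 2*(u-u^2)*(1-2*u))^2) u := by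
  have hp : HasDerivAt (fun u:ℝ => u - u^2) (1-2*u) u := by
    exact ((hasDerivAt_id' u).sub (hasDerivAt_pow 2 u)).congr_deriv (by norm_num)
  have hq := (hp.pow 4).const_mul c
  have h3 := hasDerivAt_pow 3 u
  have h4 := hasDerivAt_pow 4 u
  have h5 := hasDerivAt_pow 5 u
  have h6 := hasDerivAt_pow 6 u
  have h7 := hasDerivAt_pow 7 u
  have hpoly := (((((h3.div_const 3).sub (h4.const_mul (3/2:ℝ))).add
      (h5.const_mul (13/5:ℝ))).sub (h6.const_mul (2:ℝ))).add (h7.const_mul (4/7:ℝ))).const_mul (4:ℝ)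
  have h := (((A1_hasDerivAt u).const_mul (c^2)).add hq).add hpoly
  exact h.congr_deriv (by push_cast; ring)

lemma integral_P2 (c : ℝ) :
    ∫ u in (0:ℝ)..1, (c*(u-u^2)^2 + 2*(u-u^2)*(1-2*u))^2 = c^2/630 + 2/105 := by
  rw [intervalIntegral.integral_eq_sub_of_hasDerivAt (fun u _ => A2_hasDerivAt c u)
    (by apply Continuous.intervalIntegrable; fun_prop)]
  simp [A2, A1]
  norm_num
  ring

noncomputable def tt (L r : ℝ) : ℝ := (Real.log (r^2) / 2 - L) / 4

noncomputable def zeta (n : ℕ) (c L : ℝ) (x : EuclideanSpace ℝ (Fin n)) : ℝ :=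
  ww c (tt L ‖x‖)

lemma zeta_hasGradientAt (n : ℕ) (c L : ℝ) (x : EuclideanSpace ℝ (Fin n)) (hx : x ≠ 0) :
    HasGradientAt (zeta n c L) ((ww' c (tt L ‖x‖) / (4 * ‖x‖^2)) • x) x := by
  have hns : (‖x‖:ℝ)^2 ≠ 0 := pow_ne_zero 2 (norm_ne_zero_iff.mpr hx)
  have h1 : HasFDerivAt (fun y : EuclideanSpace ℝ (Fin n) => ‖y‖^2) (2 • innerSL ℝ x) x :=
    (hasStrictFDerivAt_norm_sq x).hasFDerivAt
  have h2 : HasDerivAt Real.log (‖x‖^2)⁻¹ (‖x‖^2) := Real.hasDerivAt_log hns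
  have h3 := h2.comp_hasFDerivAt x h1
  have hlin : HasDerivAt (fun z : ℝ => (z/2 - L)/4) ((8:ℝ)⁻¹) (Real.log (‖x‖^2)) := by
    have := (((hasDerivAt_id' (Real.log (‖x‖^2))).div_const 2).sub_const L).div_const 4
    exact this.congr_deriv (by norm_num)
  have h4 : HasDerivAt (fun z : ℝ => ww c ((z/2 - L)/4)) (ww' c (tt L ‖x‖) * (8:ℝ)⁻¹)
      (Real.log (‖x‖^2)) :=
    by have := (ww_hasDerivAt c (tt L ‖x‖)).comp (Real.log (‖x‖^2)) hlin; exact this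
  have h5 := h4.comp_hasFDerivAt x h3
  have h6 : HasFDerivAt (zeta n c L)
      ((ww' c (tt L ‖x‖) / (4 * ‖x‖^2)) • innerSL ℝ x) x := by
    refine h5.congr_fderiv ?_
    ext v
    simp only [ContinuousLinearMap.coe_smul', Pi.smul_apply, ContinuousLinearMap.coe_comp',
      Function.comp_apply, ContinuousLinearMap.smul_apply, smul_eq_mul]
    field_simp
    ring
  have h7 : (InnerProductSpace.toDual ℝ (EuclideanSpace ℝ (Fin n)))
      ((ww' c (tt L ‖x‖) / (4 * ‖x‖^2)) • x) = (ww' c (tt L ‖x‖) / (4 * ‖x‖^2)) • innerSL ℝ x := by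
    ext v
    simp [InnerProductSpace.toDual_apply_apply, inner_smul_left]
  exact hasGradientAt_iff_hasFDerivAt.mpr (by rw [h7]; exact h6)

noncomputable def laplacian {n : ℕ} (u : EuclideanSpace ℝ (Fin n) → ℝ)
    (x : EuclideanSpace ℝ (Fin n)) : ℝ :=
  ∑ i, fderiv ℝ (fun y => fderiv ℝ u y (EuclideanSpace.single i 1)) x
    (EuclideanSpace.single i 1)

set_option maxHeartbeats 1600000 in
/-- For `2 ≤ n ≤ 6` the conical solution is unstable on any domain containing the
origin. -/
theorem stmt6 (n : ℕ) (hn2 : 2 ≤ n) (hn6 : n ≤ 6)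
    (Ω : Set (EuclideanSpace ℝ (Fin n))) (hΩ : IsOpen Ω) (h0 : (0 : EuclideanSpace ℝ (Fin n)) ∈ Ω)
    (u : EuclideanSpace ℝ (Fin n) → ℝ)
    (hu : u = fun x => ‖x‖ / Real.sqrt ((n : ℝ) - 1)) :
    ∃ ζ : EuclideanSpace ℝ (Fin n) → ℝ, ContDiff ℝ 1 ζ ∧ HasCompactSupport ζ ∧
      tsupport ζ ⊆ Ω ∧
      ∫ x in Ω, (ζ x) ^ 2 / (u x) ^ 2 > ∫ x in Ω, ‖gradient ζ x‖ ^ 2 := by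
  classical
  subst hu
  have hn2' : (2:ℝ) ≤ (n:ℝ) := by exact_mod_cast hn2
  have hn6' : ((n:ℝ)) ≤ 6 := by exact_mod_cast hn6
  obtain ⟨ε, hε, hball⟩ := Metric.isOpen_iff.mp hΩ 0 h0
  set s : ℝ := min (ε/2) 1 * Real.exp (-5) with hs_def
  have hs_pos : 0 < s := by
    have h1 : 0 < min (ε/2) 1 := lt_min (by linarith) one_pos
    positivity
  set L : ℝ := Real.log s with hL_def
  set c : ℝ := -2 * ((n:ℝ) - 2) with hc_def
  set b : ℝ := s * Real.exp 4 with hb_def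
  have hb_pos : 0 < b := by positivity
  have hsb : s < b := by
    nlinarith [Real.one_lt_exp_iff.mpr (show (0:ℝ) < 4 by norm_num)]
  have hL5 : L ≤ -5 := by
    have hs1 : s ≤ Real.exp (-5) := by
      have : min (ε/2) 1 ≤ 1 := min_le_right _ _
      nlinarith [Real.exp_pos (-5:ℝ)]
    have := Real.log_le_log hs_pos hs1
    rwa [Real.log_exp] at this
  have hbε : b < ε := by
    have h1 : b = min (ε/2) 1 * Real.exp (-1) := by
      rw [hb_def, hs_def, mul_assoc, ← Real.exp_add]
      norm_num
    have h2 : Real.exp (-1:ℝ) ≤ 1 := Real.exp_le_one_iff.mpr (by norm_num)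
    have h3 : min (ε/2) 1 ≤ ε/2 := min_le_left _ _
    have h4 : 0 < min (ε/2) 1 := lt_min (by linarith) one_pos
    nlinarith
  -- vanishing of the profile
  have hwz_lo : ∀ r : ℝ, 0 ≤ r → r ≤ s → ww c (tt L r) = 0 ∧ ww' c (tt L r) = 0 := by
    intro r hr0 hrs
    rcases eq_or_lt_of_le hr0 with h|h
    · apply ww_zero
      right
      have ht : tt L r = -L/4 := by
        rw [← h]
        simp [tt]
      rw [ht]
      linarith
    · apply ww_zero
      left
      have hlog : Real.log (r^2) = 2 * Real.log r := by
        rw [Real.log_pow]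
        norm_num
      have h2 : Real.log r ≤ L := Real.log_le_log h hrs
      simp only [tt, hlog]
      linarith
  have hwz_hi : ∀ r : ℝ, b < r → ww c (tt L r) = 0 ∧ ww' c (tt L r) = 0 := by
    intro r hbr
    apply ww_zero
    right
    have hr0 : 0 < r := lt_trans hb_pos hbr
    have hlog : Real.log (r^2) = 2 * Real.log r := by
      rw [Real.log_pow]; norm_num
    have h2 : L + 4 ≤ Real.log r := by
      have := Real.log_le_log hb_pos hbr.le
      rwa [hb_def, Real.log_mul (ne_of_gt hs_pos) (Real.exp_ne_zero 4), Real.log_exp] at this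
    simp only [tt, hlog]
    linarith
  -- eventually zero near the origin
  have hev : zeta n c L =ᶠ[nhds (0 : EuclideanSpace ℝ (Fin n))] (fun _ => (0:ℝ)) := by
    filter_upwards [Metric.ball_mem_nhds (0 : EuclideanSpace ℝ (Fin n)) hs_pos] with y hy
    have hy' : ‖y‖ < s := by simpa [dist_zero_right] using hy
    exact (hwz_lo ‖y‖ (norm_nonneg y) hy'.le).1
  -- support
  have hsupp : tsupport (zeta n c L) ⊆ Metric.closedBall 0 b := by
    apply closure_minimal _ Metric.isClosed_closedBall
    intro x hx
    simp only [Function.mem_support] at hx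
    by_contra hxb
    have hb' : b < ‖x‖ := by
      simp only [Metric.mem_closedBall, dist_zero_right, not_le] at hxb
      exact hxb
    exact hx (hwz_hi ‖x‖ hb').1
  have hsuppΩ : tsupport (zeta n c L) ⊆ Ω := by
    refine hsupp.trans ((Metric.closedBall_subset_ball hbε).trans hball)
  refine ⟨zeta n c L, ?_, ?_, hsuppΩ, ?_⟩
  · -- ContDiff
    rw [contDiff_iff_contDiffAt]
    intro x
    by_cases hx : x = 0
    · subst hx
      exact (contDiffAt_const (c := (0:ℝ))).congr_of_eventuallyEq hev
    · have hns : ‖x‖^2 ≠ 0 := pow_ne_zero 2 (norm_ne_zero_iff.mpr hx)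
      have h1 : ContDiffAt ℝ 1 (fun y : EuclideanSpace ℝ (Fin n) => ‖y‖^2) x :=
        contDiffAt_id.norm_sq ℝ
      have h2 : ContDiffAt ℝ 1 Real.log (‖x‖^2) := Real.contDiffAt_log.mpr hns
      have h3 := h2.comp x h1
      have h4 : ContDiffAt ℝ 1 (fun y : EuclideanSpace ℝ (Fin n) =>
          (Real.log (‖y‖^2)/2 - L)/4) x :=
        ((h3.div_const 2).sub contDiffAt_const).div_const 4
      exact (ww_contDiff c).contDiffAt.comp x h4
  · -- HasCompactSupport
    exact HasCompactSupport.of_support_subset_isCompact (isCompact_closedBall (0 : EuclideanSpace ℝ (Fin n)) b)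
      (subset_trans subset_closure hsupp)
  · -- the instability inequality
    haveI : Nontrivial (EuclideanSpace ℝ (Fin n)) := by
      apply Module.nontrivial_of_finrank_pos (R := ℝ)
      rw [finrank_euclideanSpace_fin]
      omega
    set K : ℝ := Real.exp (((n:ℝ) - 2) * L) with hK_def
    have hK_pos : 0 < K := Real.exp_pos _
    set F₁ : ℝ → ℝ := fun r => (((n:ℝ)-1) * (ww c (tt L r))^2) / r^2 with hF1_def
    set F₂ : ℝ → ℝ := fun r => (ww' c (tt L r))^2 / (4*r)^2 with hF2_def
    -- pointwise identity for the zeroth order term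
    have hzeta_eq : ∀ x : EuclideanSpace ℝ (Fin n),
        (zeta n c L x)^2 / ((‖x‖ / Real.sqrt ((n:ℝ)-1))^2) = F₁ ‖x‖ := by
      intro x
      have hsq : (Real.sqrt ((n:ℝ)-1))^2 = (n:ℝ)-1 := Real.sq_sqrt (by linarith)
      rw [div_pow, hsq, div_div_eq_mul_div, hF1_def]
      show zeta n c L x ^2 * ((n:ℝ)-1) / ‖x‖^2 = _
      rw [zeta]
      ring
    -- gradient identities
    have hgrad0 : gradient (zeta n c L) (0 : EuclideanSpace ℝ (Fin n)) = 0 := by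
      have hf : HasFDerivAt (zeta n c L) (0 : EuclideanSpace ℝ (Fin n) →L[ℝ] ℝ) 0 :=
        (hasFDerivAt_const (0:ℝ) (0:EuclideanSpace ℝ (Fin n))).congr_of_eventuallyEq hev
      have h2 := hf.hasGradientAt
      rw [map_zero] at h2
      exact h2.gradient
    have hgrad_eq : ∀ x : EuclideanSpace ℝ (Fin n),
        ‖gradient (zeta n c L) x‖^2 = F₂ ‖x‖ := by
      intro x
      by_cases hx : x = 0
      · subst hx
        rw [hgrad0]
        simp [hF2_def]
      · have hxn : ‖x‖ ≠ 0 := norm_ne_zero_iff.mpr hx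
        rw [(zeta_hasGradientAt n c L x hx).gradient, norm_smul, hF2_def]
        show (‖ww' c (tt L ‖x‖) / (4 * ‖x‖^2)‖ * ‖x‖)^2 = _
        rw [Real.norm_eq_abs, mul_pow, sq_abs]
        field_simp
    -- integrands vanish off Ω
    have hzeroΩ : ∀ x : EuclideanSpace ℝ (Fin n), x ∉ Ω →
        ww c (tt L ‖x‖) = 0 ∧ ww' c (tt L ‖x‖) = 0 := by
      intro x hx
      apply hwz_hi
      by_contra hb'
      push_neg at hb'
      exact hx (hball (Metric.closedBall_subset_ball hbε (by simpa [dist_zero_right] using hb')))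
    -- polar coordinates
    have hpolar : ∀ F : ℝ → ℝ, ∫ x : EuclideanSpace ℝ (Fin n), F ‖x‖
        = n • (volume (Metric.ball (0:EuclideanSpace ℝ (Fin n)) 1)).toReal •
          ∫ y in Set.Ioi (0:ℝ), y^(n-1) • F y := by
      intro F
      have h := MeasureTheory.integral_fun_norm_addHaar
        (volume : Measure (EuclideanSpace ℝ (Fin n))) F
      rwa [finrank_euclideanSpace_fin] at h
    have hI1 : ∫ x in Ω, (zeta n c L x)^2 / ((‖x‖ / Real.sqrt ((n:ℝ)-1))^2)
        = n • (volume (Metric.ball (0:EuclideanSpace ℝ (Fin n)) 1)).toReal •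
          ∫ y in Set.Ioi (0:ℝ), y^(n-1) • F₁ y := by
      rw [← hpolar F₁]
      rw [setIntegral_congr_fun hΩ.measurableSet (fun x _ => hzeta_eq x)]
      apply setIntegral_eq_integral_of_forall_compl_eq_zero
      intro x hx
      rw [hF1_def]
      simp [(hzeroΩ x hx).1]
    have hI2 : ∫ x in Ω, ‖gradient (zeta n c L) x‖^2
        = n • (volume (Metric.ball (0:EuclideanSpace ℝ (Fin n)) 1)).toReal •
          ∫ y in Set.Ioi (0:ℝ), y^(n-1) • F₂ y := by
      rw [← hpolar F₂]
      rw [setIntegral_congr_fun hΩ.measurableSet (fun x _ => hgrad_eq x)]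
      apply setIntegral_eq_integral_of_forall_compl_eq_zero
      intro x hx
      rw [hF2_def]
      simp [(hzeroΩ x hx).2]
    -- reduction of the radial integrals to an interval
    have hred : ∀ F : ℝ → ℝ, (∀ r, 0 ≤ r → r ≤ s → F r = 0) → (∀ r, b < r → F r = 0) →
        ∫ y in Set.Ioi (0:ℝ), y^(n-1) • F y = ∫ y in s..b, y^(n-1) * F y := by
      intro F h1 h2
      simp only [smul_eq_mul]
      have heq : Set.EqOn (fun y => y^(n-1) * F y)
          ((Set.Ioc s b).indicator (fun y => y^(n-1) * F y)) (Set.Ioi 0) := by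
        intro y hy
        by_cases hmem : y ∈ Set.Ioc s b
        · rw [Set.indicator_of_mem hmem]
        · rw [Set.indicator_of_notMem hmem]
          have hy0 : (0:ℝ) < y := hy
          rw [Set.mem_Ioc] at hmem
          rcases not_and_or.mp hmem with h|h
          · simp [h1 y hy0.le (not_lt.mp h)]
          · simp [h2 y (not_le.mp h)]
      rw [setIntegral_congr_fun measurableSet_Ioi heq, integral_indicator measurableSet_Ioc,
        Measure.restrict_restrict measurableSet_Ioc,
        show Set.Ioc s b ∩ Set.Ioi (0:ℝ) = Set.Ioc s b from
          Set.inter_eq_self_of_subset_left (fun y hy => lt_trans hs_pos hy.1),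
        ← intervalIntegral.integral_of_le hsb.le]
    have hF1lo : ∀ r : ℝ, 0 ≤ r → r ≤ s → F₁ r = 0 := by
      intro r h1 h2; rw [hF1_def]; simp [(hwz_lo r h1 h2).1]
    have hF1hi : ∀ r : ℝ, b < r → F₁ r = 0 := by
      intro r h1; rw [hF1_def]; simp [(hwz_hi r h1).1]
    have hF2lo : ∀ r : ℝ, 0 ≤ r → r ≤ s → F₂ r = 0 := by
      intro r h1 h2; rw [hF2_def]; simp [(hwz_lo r h1 h2).2]
    have hF2hi : ∀ r : ℝ, b < r → F₂ r = 0 := by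
      intro r h1; rw [hF2_def]; simp [(hwz_hi r h1).2]
    -- the substitution r = exp (4 t + L)
    set φ : ℝ → ℝ := fun t => Real.exp (4*t + L) with hφ_def
    have hφ_pos : ∀ t, 0 < φ t := fun t => Real.exp_pos _
    have hφ0 : φ 0 = s := by
      rw [hφ_def]
      show Real.exp (4*0 + L) = s
      rw [show 4*(0:ℝ) + L = L by ring]
      exact Real.exp_log hs_pos
    have hφ1 : φ 1 = b := by
      rw [hφ_def]
      show Real.exp (4*1 + L) = b
      rw [show 4*(1:ℝ) + L = L + 4 by ring, Real.exp_add, Real.exp_log hs_pos, hb_def]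
    have hφd : ∀ t ∈ Set.uIcc (0:ℝ) 1, HasDerivAt φ (4 * φ t) t := by
      intro t _
      have h1 := (((hasDerivAt_id t).const_mul (4:ℝ)).add_const L).exp
      have h2 : HasDerivAt (fun x : ℝ => Real.exp (4*x + L)) (Real.exp (4*t+L) * (4*1)) t := h1
      rw [hφ_def]
      convert h2 using 1
      simp
      ring
    have hφ'c : ContinuousOn (fun t => 4 * φ t) (Set.uIcc (0:ℝ) 1) := by
      apply Continuous.continuousOn
      rw [hφ_def]
      fun_prop
    have himg : φ '' Set.uIcc (0:ℝ) 1 ⊆ {r : ℝ | r ≠ 0} := by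
      rintro r ⟨t, _, rfl⟩
      exact (hφ_pos t).ne'
    have httc : ContinuousOn (tt L) {r : ℝ | r ≠ 0} := by
      unfold tt
      apply ContinuousOn.div_const
      apply ContinuousOn.sub _ continuousOn_const
      apply ContinuousOn.div_const
      exact Real.continuousOn_log.comp ((continuous_pow 2).continuousOn)
        (fun r hr => Set.mem_compl_singleton_iff.mpr (pow_ne_zero 2 hr))
    have hcont1 : ContinuousOn (fun y : ℝ => y^(n-1) * F₁ y) {r : ℝ | r ≠ 0} := by
      rw [hF1_def]
      apply ContinuousOn.mul (Continuous.continuousOn (by fun_prop))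
      apply ContinuousOn.div
      · exact ContinuousOn.mul continuousOn_const
          (((ww_continuous c).comp_continuousOn httc).pow 2)
      · exact Continuous.continuousOn (by fun_prop)
      · intro r hr
        exact pow_ne_zero 2 hr
    have hcont2 : ContinuousOn (fun y : ℝ => y^(n-1) * F₂ y) {r : ℝ | r ≠ 0} := by
      rw [hF2_def]
      apply ContinuousOn.mul (Continuous.continuousOn (by fun_prop))
      apply ContinuousOn.div
      · exact ((ww'_continuous c).comp_continuousOn httc).pow 2
      · exact Continuous.continuousOn (by fun_prop)
      · intro r hr
        exact pow_ne_zero 2 (by intro h; exact hr (by nlinarith [hφ_pos 0] : (r:ℝ) = 0))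
    have hsub1 : ∫ y in s..b, y^(n-1) * F₁ y
        = ∫ t in (0:ℝ)..1, (4 * φ t) * ((φ t)^(n-1) * F₁ (φ t)) := by
      have h := intervalIntegral.integral_comp_smul_deriv' hφd hφ'c (hcont1.mono himg)
      rw [hφ0, hφ1] at h
      simp only [smul_eq_mul, Function.comp] at h
      exact h.symm
    have hsub2 : ∫ y in s..b, y^(n-1) * F₂ y
        = ∫ t in (0:ℝ)..1, (4 * φ t) * ((φ t)^(n-1) * F₂ (φ t)) := by
      have h := intervalIntegral.integral_comp_smul_deriv' hφd hφ'c (hcont2.mono himg)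
      rw [hφ0, hφ1] at h
      simp only [smul_eq_mul, Function.comp] at h
      exact h.symm
    -- pointwise identities for the substituted integrands
    have htt_φ : ∀ t : ℝ, tt L (φ t) = t := by
      intro t
      rw [hφ_def]
      simp only [tt]
      rw [Real.log_pow, Real.log_exp]
      push_cast
      ring
    have e2 : ∀ t : ℝ, (φ t)^2 = Real.exp ((2:ℝ) * (4*t + L)) := by
      intro t
      rw [hφ_def]
      simp only []
      rw [← Real.exp_nat_mul]
      norm_num
    have e1 : ∀ t : ℝ, (φ t)^(n-1) = Real.exp ((((n:ℝ))-1) * (4*t + L)) := by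
      intro t
      rw [hφ_def]
      simp only []
      rw [← Real.exp_nat_mul]
      congr 1
      rw [Nat.cast_sub (by omega), Nat.cast_one]
    have e3 : ∀ t : ℝ, Real.exp (c*t)^2 = Real.exp ((2:ℝ)*(c*t)) := by
      intro t
      rw [← Real.exp_nat_mul]
      norm_num
    have e5 : ∀ t : ℝ, Real.exp (4*t + L) * Real.exp ((((n:ℝ))-1) * (4*t+L)) *
        Real.exp ((2:ℝ)*(c*t)) / Real.exp ((2:ℝ)*(4*t+L)) = K := by
      intro t
      rw [← Real.exp_add, ← Real.exp_add, ← Real.exp_sub, hK_def]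
      congr 1
      rw [hc_def]
      ring
    have hPH1 : ∀ t : ℝ, (4 * φ t) * ((φ t)^(n-1) * F₁ (φ t))
        = (((n:ℝ)-1) * (4*K)) * (gg t)^2 := by
      intro t
      rw [hF1_def]
      simp only [htt_φ t, ww]
      rw [mul_pow, e1 t, e2 t, e3 t, ← e5 t]
      rw [hφ_def]
      simp only []
      field_simp
    have hPH2 : ∀ t : ℝ, (4 * φ t) * ((φ t)^(n-1) * F₂ (φ t))
        = (K/4) * (c * gg t + gg' t)^2 := by
      intro t
      rw [hF2_def]
      simp only [htt_φ t, ww']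
      rw [mul_pow, mul_pow, e1 t, e2 t, e3 t, ← e5 t]
      rw [hφ_def]
      simp only []
      field_simp
    -- values of the interval integrals
    have hmax : ∀ t ∈ Set.uIcc (0:ℝ) 1, max 0 (t - t^2) = t - t^2 := by
      intro t ht
      rw [Set.uIcc_of_le (by norm_num : (0:ℝ) ≤ 1)] at ht
      exact max_eq_right (by nlinarith [ht.1, ht.2])
    have hval1 : ∫ t in (0:ℝ)..1, (((n:ℝ)-1) * (4*K)) * (gg t)^2
        = (((n:ℝ)-1) * (4*K)) * (1/630) := by
      rw [intervalIntegral.integral_const_mul]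
      congr 1
      have hEq : Set.EqOn (fun t => (gg t)^2) (fun t => (t - t^2)^4) (Set.uIcc (0:ℝ) 1) := by
        intro t ht
        simp only [gg, hmax t ht]
        ring
      rw [intervalIntegral.integral_congr hEq, integral_P1]
    have hval2 : ∫ t in (0:ℝ)..1, (K/4) * (c * gg t + gg' t)^2
        = (K/4) * (c^2/630 + 2/105) := by
      rw [intervalIntegral.integral_const_mul]
      congr 1
      have hEq : Set.EqOn (fun t => (c * gg t + gg' t)^2)
          (fun t => (c*(t-t^2)^2 + 2*(t-t^2)*(1-2*t))^2) (Set.uIcc (0:ℝ) 1) := by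
        intro t ht
        simp only [gg, gg', hmax t ht]
      rw [intervalIntegral.integral_congr hEq, integral_P2]
    -- the numeric comparison
    have hkey : c^2 + 12 < 16*((n:ℝ)-1) := by
      rw [hc_def]
      nlinarith [mul_nonneg (sub_nonneg.mpr hn2') (sub_nonneg.mpr hn6')]
    have hmain : (∫ y in Set.Ioi (0:ℝ), y^(n-1) • F₂ y)
        < ∫ y in Set.Ioi (0:ℝ), y^(n-1) • F₁ y := by
      rw [hred F₁ hF1lo hF1hi, hred F₂ hF2lo hF2hi, hsub1, hsub2,
        intervalIntegral.integral_congr (fun t _ => hPH1 t),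
        intervalIntegral.integral_congr (fun t _ => hPH2 t), hval1, hval2]
      nlinarith [mul_lt_mul_of_pos_left hkey hK_pos]
    -- conclusion
    rw [gt_iff_lt]
    show (∫ x in Ω, ‖gradient (zeta n c L) x‖ ^ 2) <
      ∫ x in Ω, (zeta n c L x)^2 / ((‖x‖ / Real.sqrt ((n:ℝ)-1))^2)
    rw [hI1, hI2]
    simp only [nsmul_eq_mul, smul_eq_mul]
    have hr_pos : 0 < (volume (Metric.ball (0:EuclideanSpace ℝ (Fin n)) 1)).toReal :=
      ENNReal.toReal_pos (Metric.measure_ball_pos volume 0 one_pos).ne' measure_ball_lt_top.ne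
    have hn_pos : (0:ℝ) < (n:ℝ) := by linarith
    exact mul_lt_mul_of_pos_left (mul_lt_mul_of_pos_left hmain hr_pos) hn_pos
end

section
/- Hardy's inequality: for n ≥ 3 and every ζ ∈ C_c¹(ℝⁿ), ((n-2)²/4) ∫ ζ(x)²/|x|² dx ≤ ∫ |Dζ(x)|² dx. -/
open MeasureTheory Real

section HardyAux

open Set

lemma eucl_sum_single (n : ℕ) (v : EuclideanSpace ℝ (Fin n)) :
    ∑ i, v i • EuclideanSpace.single i (1:ℝ) = v := by
  ext j
  rw [show (∑ i, v i • EuclideanSpace.single i (1:ℝ)) j = ∑ i, (v i • EuclideanSpace.single i (1:ℝ)) j from by rw [WithLp.ofLp_sum, Finset.sum_apply]]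
  simp [EuclideanSpace.single_apply]

lemma clm_sum_single (n : ℕ) (L : EuclideanSpace ℝ (Fin n) →L[ℝ] ℝ) (v : EuclideanSpace ℝ (Fin n)) :
    ∑ i, L (EuclideanSpace.single i (1:ℝ)) * v i = L v := by
  conv_rhs => rw [← eucl_sum_single n v]
  rw [map_sum]
  simp [mul_comm]


lemma div_integral_zero (m : ℕ) (W : EuclideanSpace ℝ (Fin (m+1)) → EuclideanSpace ℝ (Fin (m+1)))
    (hW : ContDiff ℝ 1 W) (hs : HasCompactSupport W) :
    ∫ x : EuclideanSpace ℝ (Fin (m+1)), ∑ i, fderiv ℝ W x (EuclideanSpace.single i 1) i = 0 := by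
  classical
  set e : EuclideanSpace ℝ (Fin (m+1)) ≃L[ℝ] (Fin (m+1) → ℝ) :=
    EuclideanSpace.equiv (Fin (m+1)) ℝ with he
  obtain ⟨R0, hR0⟩ := (hs.image e.continuous).isBounded.subset_closedBall 0
  set R : ℝ := max R0 0 with hRdef
  have hR : (⇑e '' tsupport W) ⊆ Metric.closedBall 0 R :=
    hR0.trans (Metric.closedBall_subset_closedBall (le_max_left _ _))
  have hR0' : (0:ℝ) ≤ R := le_max_right _ _
  set a : Fin (m+1) → ℝ := fun _ => -(R+1) with ha
  set b : Fin (m+1) → ℝ := fun _ => (R+1) with hb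
  have hab : a ≤ b := fun i => by simp only [a, b]; linarith
  set F : (Fin (m+1) → ℝ) → Fin (m+1) → ℝ := fun y i => W (e.symm y) i with hF
  set F' : (Fin (m+1) → ℝ) → (Fin (m+1) → ℝ) →L[ℝ] (Fin (m+1) → ℝ) := fun y =>
    ((e : EuclideanSpace ℝ (Fin (m+1)) →L[ℝ] (Fin (m+1) → ℝ)).comp ((fderiv ℝ W (e.symm y)).comp
      (e.symm : (Fin (m+1) → ℝ) →L[ℝ] EuclideanSpace ℝ (Fin (m+1))))) with hF'
  have hFd : ∀ y, HasFDerivAt F (F' y) y := by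
    intro y
    have h2 : HasFDerivAt W (fderiv ℝ W (e.symm y)) (e.symm y) :=
      (hW.differentiable one_ne_zero (e.symm y)).hasFDerivAt
    exact (e.hasFDerivAt.comp y (h2.comp y e.symm.hasFDerivAt) : _)
  -- zero outside the support image
  have hzero : ∀ y : Fin (m+1) → ℝ, y ∉ Metric.closedBall (0 : Fin (m+1) → ℝ) R →
      F' y = 0 := by
    intro y hy
    have : e.symm y ∉ tsupport W := by
      intro h
      exact hy (hR ⟨e.symm y, h, by simp⟩)
    have hfd : fderiv ℝ W (e.symm y) = 0 := by
      by_contra h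
      exact this (support_fderiv_subset ℝ (Function.mem_support.mpr h))
    simp only [hF', hfd]
    ext v i
    simp
  have hcont_div : Continuous fun y : Fin (m+1) → ℝ => ∑ i, F' y (Pi.single i 1) i := by
    apply continuous_finset_sum
    intro i _
    have h1 : Continuous fun y : Fin (m+1) → ℝ => fderiv ℝ W (e.symm y) :=
      (hW.continuous_fderiv one_ne_zero).comp e.symm.continuous
    have h2 : Continuous fun y : Fin (m+1) → ℝ => F' y (Pi.single i 1) := by
      simp only [hF', ContinuousLinearMap.comp_apply]
      exact (ContinuousLinearMap.continuous _).comp (h1.clm_apply continuous_const)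
    exact (continuous_apply i).comp h2
  have key := MeasureTheory.integral_divergence_of_hasFDerivAt_off_countable a b hab
    F F' ∅ countable_empty
    (Continuous.continuousOn (by
      apply continuous_pi
      intro i
      exact (continuous_apply i).comp (e.continuous.comp (hW.continuous.comp e.symm.continuous))))
    (fun x _ => hFd x)
    (hcont_div.continuousOn.integrableOn_compact isCompact_Icc)
  -- boundary terms vanish
  have hfaces : ∀ (i : Fin (m+1)) (c : ℝ), |c| = R + 1 →
      ∀ x : Fin m → ℝ, F (i.insertNth c x) i = 0 := by
    intro i c hc x
    set y : Fin (m+1) → ℝ := i.insertNth c x with hy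
    have hnorm : ¬ (y ∈ Metric.closedBall (0 : Fin (m+1) → ℝ) R) := by
      intro h
      rw [Metric.mem_closedBall, dist_zero_right] at h
      have h2 : ‖y i‖ ≤ ‖y‖ := norm_le_pi_norm y i
      have h3 : y i = c := Fin.insertNth_apply_same (α := fun _ : Fin (m+1) => ℝ) i c x
      rw [h3, Real.norm_eq_abs, hc] at h2
      linarith
    have hns : e.symm y ∉ tsupport W := by
      intro h
      exact hnorm (hR ⟨e.symm y, h, by simp⟩)
    have hW0 : W (e.symm y) = 0 := image_eq_zero_of_notMem_tsupport hns
    simp [hF, hW0]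
  rw [Finset.sum_eq_zero (fun i (_ : i ∈ Finset.univ) => by
    rw [setIntegral_congr_fun measurableSet_Icc
        (fun x _ => hfaces i (b i) (by rw [abs_of_nonneg (by positivity : (0:ℝ) ≤ R + 1)]) x),
      setIntegral_congr_fun measurableSet_Icc
        (fun x _ => hfaces i (a i) (by rw [show a i = -(R+1) from rfl, abs_neg, abs_of_nonneg (by positivity : (0:ℝ) ≤ R + 1)]) x),
      integral_zero, sub_zero])] at key
  have hout : ∀ y : Fin (m+1) → ℝ, y ∉ Icc a b → (∑ i, F' y (Pi.single i 1) i) = 0 := by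
    intro y hy
    have hy' : y ∉ Metric.closedBall (0 : Fin (m+1) → ℝ) R := by
      intro h
      apply hy
      rw [Metric.mem_closedBall, dist_zero_right] at h
      constructor
      · intro i
        have := (abs_le.mp ((norm_le_pi_norm y i).trans h)).1
        show -(R+1) ≤ y i
        linarith [this]
      · intro i
        have := (abs_le.mp ((norm_le_pi_norm y i).trans h)).2
        show y i ≤ R+1
        linarith [this]
    rw [hzero y hy']
    simp
  rw [setIntegral_eq_integral_of_forall_compl_eq_zero hout] at key
  have hrw : ∀ y : Fin (m+1) → ℝ, (∑ i, F' y (Pi.single i 1) i) =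
      ∑ i, fderiv ℝ W (e.symm y) (EuclideanSpace.single i 1) i := by
    intro y
    rfl
  rw [integral_congr_ae (Filter.Eventually.of_forall hrw)] at key
  have mp := (EuclideanSpace.volume_preserving_symm_measurableEquiv_toLp (Fin (m+1))).symm
  have hcoe : ∀ y : Fin (m+1) → ℝ,
      (MeasurableEquiv.toLp 2 (Fin (m+1) → ℝ)).symm.symm y = e.symm y := fun y => rfl
  rw [← mp.integral_comp (MeasurableEquiv.measurableEmbedding _)
    (fun x => ∑ i, fderiv ℝ W x (EuclideanSpace.single i 1) i)]
  exact key


lemma hardy_divW (n : ℕ) (ε : ℝ) (hε : 0 < ε) (ζ : EuclideanSpace ℝ (Fin n) → ℝ)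
    (hζ : ContDiff ℝ 1 ζ) (x : EuclideanSpace ℝ (Fin n)) :
    ∑ i, fderiv ℝ (fun y => (ζ y)^2 • ((‖y‖^2 + ε^2)⁻¹ • y)) x (EuclideanSpace.single i 1) i
    = 2 * ζ x * ((‖x‖^2+ε^2)⁻¹ * fderiv ℝ ζ x x)
      + (ζ x)^2 * ((n : ℝ) * (‖x‖^2+ε^2)⁻¹ - 2 * ‖x‖^2 * ((‖x‖^2+ε^2)⁻¹)^2) := by
  have hden : (0:ℝ) < ‖x‖^2 + ε^2 := by positivity
  have hζx : HasFDerivAt ζ (fderiv ℝ ζ x) x := (hζ.differentiable one_ne_zero x).hasFDerivAt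
  have hd : HasFDerivAt (fun y : EuclideanSpace ℝ (Fin n) => ‖y‖^2 + ε^2)
      ((2:ℕ) • ((innerSL ℝ x).comp (ContinuousLinearMap.id ℝ _))) x :=
    ((hasFDerivAt_id x).norm_sq).add_const _
  have hφ : HasFDerivAt (fun y : EuclideanSpace ℝ (Fin n) => (‖y‖^2 + ε^2)⁻¹)
      ((-((‖x‖^2 + ε^2) ^ 2)⁻¹) • ((2:ℕ) • ((innerSL ℝ x).comp (ContinuousLinearMap.id ℝ _)))) x :=
    (hasDerivAt_inv hden.ne').comp_hasFDerivAt x hd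
  have hV : HasFDerivAt (fun y : EuclideanSpace ℝ (Fin n) => (‖y‖^2 + ε^2)⁻¹ • y)
      ((‖x‖^2+ε^2)⁻¹ • (ContinuousLinearMap.id ℝ _) +
        ((-((‖x‖^2 + ε^2) ^ 2)⁻¹) • ((2:ℕ) • ((innerSL ℝ x).comp (ContinuousLinearMap.id ℝ _)))).smulRight x) x :=
    hφ.smul (hasFDerivAt_id x)
  have hζ2 : HasFDerivAt (fun y => (ζ y)^2)
      (ζ x • fderiv ℝ ζ x + ζ x • fderiv ℝ ζ x) x := by
    have := hζx.mul hζx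
    exact this.congr_of_eventuallyEq (Filter.Eventually.of_forall fun y => pow_two (ζ y))
  have hW : HasFDerivAt (fun y : EuclideanSpace ℝ (Fin n) => (ζ y)^2 • ((‖y‖^2 + ε^2)⁻¹ • y))
      ((ζ x)^2 • ((‖x‖^2+ε^2)⁻¹ • (ContinuousLinearMap.id ℝ _) +
        ((-((‖x‖^2 + ε^2) ^ 2)⁻¹) • ((2:ℕ) • ((innerSL ℝ x).comp (ContinuousLinearMap.id ℝ _)))).smulRight x) +
        (ζ x • fderiv ℝ ζ x + ζ x • fderiv ℝ ζ x).smulRight ((‖x‖^2+ε^2)⁻¹ • x)) x :=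
    hζ2.smul hV
  rw [hW.fderiv]
  simp only [ContinuousLinearMap.add_apply, ContinuousLinearMap.smul_apply,
    ContinuousLinearMap.smulRight_apply, ContinuousLinearMap.coe_smul',
    ContinuousLinearMap.id_apply, ContinuousLinearMap.coe_comp', Function.comp_apply,
    innerSL_apply_apply, Pi.smul_apply, PiLp.add_apply, PiLp.smul_apply, smul_eq_mul]
  rw [Finset.sum_add_distrib]
  set L := fderiv ℝ ζ x with hL
  have hxx : ∑ i, x i * x i = ‖x‖^2 := by
    rw [EuclideanSpace.norm_eq x, Real.sq_sqrt (Finset.sum_nonneg fun i _ => sq_nonneg _)]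
    exact Finset.sum_congr rfl fun i _ => by rw [Real.norm_eq_abs, sq_abs, sq]
  have hsum2 : ∑ i, (ζ x * L (EuclideanSpace.single i 1) + ζ x * L (EuclideanSpace.single i 1))
      * ((‖x‖^2+ε^2)⁻¹ * x i) = 2 * ζ x * ((‖x‖^2+ε^2)⁻¹ * L x) := by
    rw [show (2 : ℝ) * ζ x * ((‖x‖^2+ε^2)⁻¹ * L x) =
        (2 * ζ x * (‖x‖^2+ε^2)⁻¹) * ∑ i, L (EuclideanSpace.single i 1) * x i by
      rw [clm_sum_single n L x]; ring, Finset.mul_sum]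
    exact Finset.sum_congr rfl fun i _ => by ring
  rw [hsum2]
  have hsum1 : ∑ i, ζ x ^ 2 *
        ((‖x‖ ^ 2 + ε ^ 2)⁻¹ * EuclideanSpace.single i 1 i +
          -((‖x‖ ^ 2 + ε ^ 2) ^ 2)⁻¹ * 2 • inner ℝ x (EuclideanSpace.single i (1:ℝ)) * x i)
      = (ζ x)^2 * ((n : ℝ) * (‖x‖^2+ε^2)⁻¹ - 2 * ‖x‖^2 * ((‖x‖^2+ε^2)⁻¹)^2) := by
    have hterm : ∀ i : Fin n, ζ x ^ 2 *
        ((‖x‖ ^ 2 + ε ^ 2)⁻¹ * EuclideanSpace.single i 1 i +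
          -((‖x‖ ^ 2 + ε ^ 2) ^ 2)⁻¹ * 2 • inner ℝ x (EuclideanSpace.single i (1:ℝ)) * x i)
        = ζ x ^ 2 * (‖x‖ ^ 2 + ε ^ 2)⁻¹
          - 2 * ζ x ^ 2 * (((‖x‖^2+ε^2)⁻¹)^2) * (x i * x i) := by
      intro i
      have h1 : EuclideanSpace.single i (1:ℝ) i = 1 := by
        simp [EuclideanSpace.single_apply]
      have h2 : (inner ℝ x (EuclideanSpace.single i (1:ℝ)) : ℝ) = x i := by
        simp [EuclideanSpace.inner_single_right]
      rw [h1, h2, nsmul_eq_mul, ← inv_pow]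
      push_cast
      ring
    rw [Finset.sum_congr rfl fun i _ => hterm i, Finset.sum_sub_distrib,
      Finset.sum_const, ← Finset.mul_sum, hxx]
    simp only [Finset.card_univ, Fintype.card_fin, nsmul_eq_mul]
    ring
  rw [hsum1]
  ring

lemma hardy_arith (t a p r g : ℝ) (ht : 0 < t) (ha : 0 ≤ a) (hp : 0 < p) (hr : 0 ≤ r)
    (hg : 0 ≤ g) (hpr : p * r^2 ≤ 1) : 2*a*p*(g*r) ≤ t*(a^2*p) + (1/t)*g^2 := by
  have h1 : p^2*r^2 ≤ p := by nlinarith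
  have h2 : 0 ≤ (t*a)^2 * (p - p^2*r^2) :=
    mul_nonneg (sq_nonneg _) (sub_nonneg.mpr h1)
  have hbr : 0 ≤ t^2*(a^2*p) + g^2 - 2*t*(a*p*(g*r)) := by
    nlinarith [sq_nonneg (t*a*(p*r) - g), h2]
  have hid2 : t*(a^2*p) + (1/t)*g^2 - 2*a*p*(g*r)
      = (1/t)*(t^2*(a^2*p) + g^2 - 2*t*(a*p*(g*r))) := by
    field_simp
  have h5 : 0 ≤ t*(a^2*p) + (1/t)*g^2 - 2*a*p*(g*r) := by
    rw [hid2]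
    exact mul_nonneg (one_div_pos.mpr ht).le hbr
  linarith


lemma hardy_pt (t u p D g r : ℝ) (ht : 0 < t) (hp : 0 < p) (hg : 0 ≤ g) (hr : 0 ≤ r)
    (hD : |D| ≤ g*r) (hpr : p*r^2 ≤ 1) : -(2*u*(p*D)) ≤ t*(u^2*p) + (1/t)*g^2 := by
  have h1 : -(2*u*(p*D)) ≤ 2 * |u| * p * (g*r) := by
    have habs : |2*u*(p*D)| ≤ 2 * |u| * p * (g*r) := by
      rw [abs_mul, abs_mul, abs_mul, abs_of_nonneg hp.le,
        abs_of_nonneg (by norm_num : (0:ℝ) ≤ 2)]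
      have := mul_le_mul_of_nonneg_left hD hp.le
      nlinarith [abs_nonneg u]
    linarith [neg_abs_le (2*u*(p*D))]
  have h2 := hardy_arith t |u| p r g ht (abs_nonneg u) hp hr hg hpr
  rw [sq_abs] at h2
  linarith

lemma hardy_eps (m : ℕ) (hn : 3 ≤ m + 1) (ζ : EuclideanSpace ℝ (Fin (m+1)) → ℝ)
    (hζ : ContDiff ℝ 1 ζ) (hsupp : HasCompactSupport ζ) (ε : ℝ) (hε : 0 < ε) :
    ((m+1 : ℝ) - 2) ^ 2 / 4 * ∫ x, (ζ x) ^ 2 * (‖x‖^2 + ε^2)⁻¹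
      ≤ ∫ x, ‖gradient ζ x‖ ^ 2 := by
  have hn3 : (3:ℝ) ≤ ((m+1 : ℕ):ℝ) := by exact_mod_cast hn
  -- abbreviations
  set φ : EuclideanSpace ℝ (Fin (m+1)) → ℝ := fun x => (‖x‖^2 + ε^2)⁻¹ with hφ
  have hφpos : ∀ x, 0 < φ x := fun x => by positivity
  have hφc : ContDiff ℝ 1 φ :=
    ((contDiff_norm_sq ℝ).add contDiff_const).inv (fun x => by positivity)
  have hζc : Continuous ζ := hζ.continuous
  have hgradnorm : ∀ x, ‖gradient ζ x‖ = ‖fderiv ℝ ζ x‖ := by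
    intro x
    rw [gradient]
    exact LinearIsometryEquiv.norm_map _ _
  have hgradinner : ∀ x v, (inner ℝ (gradient ζ x) v : ℝ) = fderiv ℝ ζ x v := by
    intro x v
    rw [gradient]
    exact InnerProductSpace.toDual_symm_apply
  have hfc : Continuous fun x => fderiv ℝ ζ x := hζ.continuous_fderiv one_ne_zero
  -- integrability of the gradient term
  have hBint : Integrable (fun x : EuclideanSpace ℝ (Fin (m+1)) => ‖gradient ζ x‖ ^ 2) := by
    apply Continuous.integrable_of_hasCompactSupport
    · simp only [hgradnorm]
      exact (hfc.norm).pow 2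
    · apply (hsupp.fderiv ℝ).mono
      intro x hx
      simp only [Function.mem_support, hgradnorm] at hx ⊢
      intro h
      exact hx (by simp [h])
  have hB0 : 0 ≤ ∫ x, ‖gradient ζ x‖ ^ 2 := integral_nonneg fun x => sq_nonneg _
  -- the vector field
  set W : EuclideanSpace ℝ (Fin (m+1)) → EuclideanSpace ℝ (Fin (m+1)) :=
    fun y => (ζ y)^2 • ((‖y‖^2 + ε^2)⁻¹ • y) with hW
  have hWc : ContDiff ℝ 1 W := (hζ.pow 2).smul (hφc.smul contDiff_id)
  have hWs : HasCompactSupport W := by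
    apply hsupp.mono
    intro x hx
    simp only [Function.mem_support, hW] at hx ⊢
    intro h
    exact hx (by simp [h])
  have hdiv0 := div_integral_zero m W hWc hWs
  -- two pieces of the divergence
  set g1 : EuclideanSpace ℝ (Fin (m+1)) → ℝ :=
    fun x => 2 * ζ x * (φ x * fderiv ℝ ζ x x) with hg1
  set g2 : EuclideanSpace ℝ (Fin (m+1)) → ℝ :=
    fun x => (ζ x)^2 * (((m+1 : ℕ) : ℝ) * φ x - 2 * ‖x‖^2 * (φ x)^2) with hg2
  have hg1int : Integrable g1 := by
    apply Continuous.integrable_of_hasCompactSupport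
    · exact (continuous_const.mul hζc).mul (hφc.continuous.mul (hfc.clm_apply continuous_id))
    · apply hsupp.mono
      intro x hx
      simp only [Function.mem_support, hg1] at hx ⊢
      intro h
      exact hx (by simp [h])
  have hg2int : Integrable g2 := by
    apply Continuous.integrable_of_hasCompactSupport
    · exact (hζc.pow 2).mul ((continuous_const.mul hφc.continuous).sub
        ((continuous_const.mul ((continuous_norm).pow 2)).mul (hφc.continuous.pow 2)))
    · apply hsupp.mono
      intro x hx
      simp only [Function.mem_support, hg2] at hx ⊢
      intro h
      exact hx (by simp [h])
  have hsplit : (∫ x, g1 x) + ∫ x, g2 x = 0 := by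
    rw [← integral_add hg1int hg2int]
    rw [← hdiv0]
    exact integral_congr_ae (Filter.Eventually.of_forall fun x => (hardy_divW (m+1) ε hε ζ hζ x).symm)
  -- integrability of ζ² φ
  have hAint : Integrable (fun x : EuclideanSpace ℝ (Fin (m+1)) => (ζ x)^2 * φ x) := by
    apply Continuous.integrable_of_hasCompactSupport
    · exact (hζc.pow 2).mul hφc.continuous
    · apply hsupp.mono
      intro x hx
      simp only [Function.mem_support] at hx ⊢
      intro h
      exact hx (by simp [h])
  set A := ∫ x, (ζ x)^2 * φ x with hA
  have hA0 : 0 ≤ A := integral_nonneg fun x => by positivity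
  -- first bound : (n-2) A ≤ ∫ g2
  have hb1 : (((m+1:ℕ):ℝ) - 2) * A ≤ ∫ x, g2 x := by
    rw [← integral_const_mul]
    apply integral_mono (hAint.const_mul _) hg2int
    intro x
    have hd : (0:ℝ) < ‖x‖^2 + ε^2 := by positivity
    have hid : (‖x‖^2 + ε^2) * φ x = 1 := mul_inv_cancel₀ hd.ne'
    simp only [hg2]
    have hr2φ : ‖x‖^2 * φ x ≤ 1 := by nlinarith [hid, mul_pos hε hε, hφpos x]
    have hmain : 0 ≤ ζ x^2 * φ x * (1 - ‖x‖^2 * φ x) :=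
      mul_nonneg (mul_nonneg (sq_nonneg _) (hφpos x).le) (by linarith)
    nlinarith [hmain]
  -- second bound : -∫ g1 ≤ t A + (1/t) B  with t = (n-2)/2
  set t : ℝ := (((m+1:ℕ):ℝ) - 2)/2 with ht
  have ht0 : 0 < t := by rw [ht]; linarith
  have hb2 : - ∫ x, g1 x ≤ t * A + (1/t) * ∫ x, ‖gradient ζ x‖ ^ 2 := by
    rw [← integral_neg, ← integral_const_mul, ← integral_const_mul]
    rw [← integral_add ((hAint.const_mul _)) (hBint.const_mul _)]
    apply integral_mono hg1int.neg ((hAint.const_mul _).add (hBint.const_mul _))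
    intro x
    have hd : (0:ℝ) < ‖x‖^2 + ε^2 := by positivity
    have hid : (‖x‖^2 + ε^2) * φ x = 1 := mul_inv_cancel₀ hd.ne'
    have hpr : φ x * ‖x‖^2 ≤ 1 := by nlinarith [mul_pos hε hε, hφpos x]
    have habs : |fderiv ℝ ζ x x| ≤ ‖gradient ζ x‖ * ‖x‖ := by
      rw [show fderiv ℝ ζ x x = inner ℝ (gradient ζ x) x from (hgradinner x x).symm]
      exact abs_real_inner_le_norm _ _
    simp only [hg1, Pi.neg_apply]
    exact hardy_pt t (ζ x) (φ x) (fderiv ℝ ζ x x) ‖gradient ζ x‖ ‖x‖ ht0 (hφpos x)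
      (norm_nonneg _) (norm_nonneg _) habs hpr
  -- combine
  have hcomb : (((m+1:ℕ):ℝ) - 2) * A ≤ t * A + (1/t) * ∫ x, ‖gradient ζ x‖ ^ 2 := by
    have : ∫ x, g2 x = - ∫ x, g1 x := by linarith [hsplit]
    linarith [hb1, hb2, this]
  -- conclude
  have hfin : (((m+1:ℕ):ℝ) - 2)^2 / 4 * A ≤ ∫ x, ‖gradient ζ x‖ ^ 2 := by
    have h5 : t * A ≤ (1/t) * ∫ x, ‖gradient ζ x‖ ^ 2 := by
      rw [ht] at hcomb ⊢
      linarith [hcomb]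
    have h6 := mul_le_mul_of_nonneg_left h5 ht0.le
    rw [show t * ((1/t) * ∫ x, ‖gradient ζ x‖ ^ 2) = ∫ x, ‖gradient ζ x‖ ^ 2 by
      field_simp] at h6
    calc (((m+1:ℕ):ℝ) - 2)^2/4 * A = t * (t * A) := by rw [ht]; ring
      _ ≤ ∫ x, ‖gradient ζ x‖ ^ 2 := h6
  have hcast : ((m:ℝ)+1) = ((m+1:ℕ):ℝ) := by push_cast; ring
  rw [show ((m:ℝ)+1-2)^2/4 = (((m+1:ℕ):ℝ)-2)^2/4 by rw [hcast]]
  exact hfin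

end HardyAux

/-- Hardy's inequality with the best constant `(n-2)²/4`. -/
theorem stmt7 (n : ℕ) (hn : 3 ≤ n)
    (ζ : EuclideanSpace ℝ (Fin n) → ℝ) (hζ : ContDiff ℝ 1 ζ)
    (hsupp : HasCompactSupport ζ) :
    ((n : ℝ) - 2) ^ 2 / 4 * ∫ x, (ζ x) ^ 2 / ‖x‖ ^ 2 ≤ ∫ x, ‖gradient ζ x‖ ^ 2 := by
  obtain ⟨m, rfl⟩ : ∃ m, n = m + 1 := ⟨n - 1, by omega⟩
  set B := ∫ x, ‖gradient ζ x‖ ^ 2 with hB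
  have hB0 : 0 ≤ B := integral_nonneg fun x => sq_nonneg _
  have hn3 : (3:ℝ) ≤ ((m+1:ℕ):ℝ) := by exact_mod_cast hn
  set c : ℝ := (((m+1:ℕ):ℝ) - 2)^2/4 with hc
  have hc0 : 0 < c := by
    have h2 : (0:ℝ) < ((m+1:ℕ):ℝ) - 2 := by linarith
    positivity
  -- the approximating functions
  set fk : ℕ → EuclideanSpace ℝ (Fin (m+1)) → ℝ :=
    fun k x => (ζ x)^2 * (‖x‖^2 + (1/((k:ℝ)+1))^2)⁻¹ with hfk
  set f : EuclideanSpace ℝ (Fin (m+1)) → ℝ := fun x => (ζ x)^2 / ‖x‖^2 with hf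
  have hεk : ∀ k : ℕ, (0:ℝ) < 1/((k:ℝ)+1) := fun k => by positivity
  have hkey : ∀ k : ℕ, c * ∫ x, fk k x ≤ B := by
    intro k
    have := hardy_eps m hn ζ hζ hsupp (1/((k:ℝ)+1)) (hεk k)
    rw [hc]
    rw [show ((m+1:ℕ):ℝ) = ((m:ℝ)+1) by push_cast; ring]
    exact this
  have hfkcont : ∀ k : ℕ, Continuous (fk k) := fun k =>
    (hζ.continuous.pow 2).mul
      (((continuous_norm.pow 2).add continuous_const).inv₀ (fun x => (by have := hεk k; positivity : (0:ℝ) < ‖x‖^2 + (1/((k:ℝ)+1))^2).ne'))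
  have hfkint : ∀ k : ℕ, Integrable (fk k) := by
    intro k
    apply Continuous.integrable_of_hasCompactSupport (hfkcont k)
    · apply hsupp.mono
      intro x hx
      simp only [Function.mem_support, hfk] at hx ⊢
      intro h
      exact hx (by simp [h])
  have hfknn : ∀ k : ℕ, ∀ x, 0 ≤ fk k x := fun k x => by
    have := hεk k
    positivity
  have hAk : ∀ k : ℕ, ∫ x, fk k x ≤ B/c := by
    intro k
    rw [le_div_iff₀ hc0]
    calc (∫ x, fk k x) * c = c * ∫ x, fk k x := by ring
      _ ≤ B := hkey k
  -- lintegral facts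
  have hlin : ∀ k : ℕ, ∫⁻ x, ENNReal.ofReal (fk k x) = ENNReal.ofReal (∫ x, fk k x) :=
    fun k => (ofReal_integral_eq_lintegral_ofReal (hfkint k)
      (Filter.Eventually.of_forall (hfknn k))).symm
  have hmono : ∀ x, Monotone fun k : ℕ => ENNReal.ofReal (fk k x) := by
    intro x k l hkl
    apply ENNReal.ofReal_le_ofReal
    apply mul_le_mul_of_nonneg_left _ (sq_nonneg _)
    apply inv_anti₀ (by positivity)
    have h1 : (1:ℝ)/((l:ℝ)+1) ≤ 1/((k:ℝ)+1) := by
      apply one_div_le_one_div_of_le (by positivity)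
      have : (k:ℝ) ≤ (l:ℝ) := by exact_mod_cast hkl
      linarith
    have h2 : ((1:ℝ)/((l:ℝ)+1))^2 ≤ ((1:ℝ)/((k:ℝ)+1))^2 := by
      apply pow_le_pow_left₀ (hεk l).le h1
    linarith
  have hae0 : ∀ᵐ x : EuclideanSpace ℝ (Fin (m+1)), x ≠ 0 := by
    rw [ae_iff]
    have : {x : EuclideanSpace ℝ (Fin (m+1)) | ¬ x ≠ 0} = {0} := by
      ext x; simp
    rw [this]
    exact measure_singleton 0
  have hsup : ∀ᵐ x : EuclideanSpace ℝ (Fin (m+1)),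
      (⨆ k : ℕ, ENNReal.ofReal (fk k x)) = ENNReal.ofReal (f x) := by
    filter_upwards [hae0] with x hx
    have hx2 : (0:ℝ) < ‖x‖^2 := by
      have : x ≠ 0 := hx
      have := norm_pos_iff.mpr this
      positivity
    have htend : Filter.Tendsto (fun k : ℕ => fk k x) Filter.atTop (nhds (f x)) := by
      have h1 : Filter.Tendsto (fun k : ℕ => 1/((k:ℝ)+1)) Filter.atTop (nhds 0) :=
        tendsto_one_div_add_atTop_nhds_zero_nat
      have h2 : Filter.Tendsto (fun k : ℕ => ‖x‖^2 + (1/((k:ℝ)+1))^2) Filter.atTop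
          (nhds (‖x‖^2 + 0^2)) := tendsto_const_nhds.add ((h1.pow 2))
      have h3 : Filter.Tendsto (fun k : ℕ => (‖x‖^2 + (1/((k:ℝ)+1))^2)⁻¹) Filter.atTop
          (nhds ((‖x‖^2)⁻¹)) := by
        have := h2.inv₀ (by simpa using hx2.ne')
        simpa using this
      have := h3.const_mul ((ζ x)^2)
      simpa [hf, hfk, div_eq_mul_inv] using this
    have htend2 : Filter.Tendsto (fun k : ℕ => ENNReal.ofReal (fk k x)) Filter.atTop
        (nhds (ENNReal.ofReal (f x))) := (ENNReal.continuous_ofReal.tendsto _).comp htend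
    exact tendsto_nhds_unique (tendsto_atTop_iSup (hmono x)) htend2
  have hL : ∫⁻ x, ENNReal.ofReal (f x) = ⨆ k : ℕ, ENNReal.ofReal (∫ x, fk k x) := by
    rw [← lintegral_congr_ae hsup]
    rw [lintegral_iSup' (fun k => ((hfkcont k).measurable.ennreal_ofReal.aemeasurable))
      (Filter.Eventually.of_forall hmono)]
    exact iSup_congr hlin
  have hLle : ∫⁻ x, ENNReal.ofReal (f x) ≤ ENNReal.ofReal (B/c) := by
    rw [hL]
    exact iSup_le fun k => ENNReal.ofReal_le_ofReal (hAk k)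
  have hfm : Measurable f :=
    ((hζ.continuous.pow 2).measurable).div ((continuous_norm.pow 2).measurable)
  have hfnn : ∀ x, 0 ≤ f x := fun x => div_nonneg (sq_nonneg _) (sq_nonneg _)
  have hint : ∫ x, f x = (∫⁻ x, ENNReal.ofReal (f x)).toReal :=
    integral_eq_lintegral_of_nonneg_ae (Filter.Eventually.of_forall hfnn)
      hfm.aestronglyMeasurable
  have hle : ∫ x, f x ≤ B/c := by
    rw [hint]
    exact ENNReal.toReal_le_of_le_ofReal (div_nonneg hB0 hc0.le) hLle
  calc c * ∫ x, f x ≤ c * (B/c) := mul_le_mul_of_nonneg_left hle hc0.le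
    _ = B := by field_simp
end
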